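/- Let Ω be a tangent space to the sparse-matrix variety and T a tangent space to the low-rank matrix variety (at a nonzero matrix), let γ > 0, 𝒴 = Ω × T, and χ(Ω,T,γ) = max{ξ(T)/γ, 2μ(Ω)γ}. If S ∈ Ω with ‖S‖∞ = γ and L ∈ T with ‖L‖₂ = 1, then g_γ(𝒫_𝒴 𝒜† 𝒜 𝒫_𝒴 (S,L)) ∈ [1 − χ(Ω,T,γ), 1 + χ(Ω,T,γ)]. -/

import Mathlib

open Matrix MeasureTheory
open scoped Classical

noncomputable section

namespace LVGGM

variable {p h : ℕ}

/-- Spectral norm (largest singular value) of a real square matrix. -/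
def specNorm (M : Matrix (Fin p) (Fin p) ℝ) : ℝ :=
  ‖Matrix.toEuclideanCLM (𝕜 := ℝ) M‖

/-- Entrywise max norm `‖M‖_∞`. -/
def maxNorm (M : Matrix (Fin p) (Fin p) ℝ) : ℝ :=
  ⨆ i, ⨆ j, |M i j|

/-- Entrywise ℓ₁ norm `‖M‖₁`. -/
def l1Norm (M : Matrix (Fin p) (Fin p) ℝ) : ℝ :=
  ∑ i, ∑ j, |M i j|

/-- The matrix of the orthogonal projection of ℝ^p onto the column space of `M`. -/
def colProj (M : Matrix (Fin p) (Fin p) ℝ) : Matrix (Fin p) (Fin p) ℝ :=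
  LinearMap.toMatrix (EuclideanSpace.basisFun (Fin p) ℝ).toBasis
    (EuclideanSpace.basisFun (Fin p) ℝ).toBasis
    ((LinearMap.range (Matrix.toEuclideanLin M)).subtype ∘ₗ
      (Submodule.orthogonalProjectionOnto (LinearMap.range (Matrix.toEuclideanLin M))).toLinearMap)

/-- Singular values of a matrix, as square roots of eigenvalues of `Mᴴ M`. -/
def singVals (M : Matrix (Fin p) (Fin p) ℝ) (i : Fin p) : ℝ :=
  Real.sqrt ((Matrix.posSemidef_conjTranspose_mul_self M).1.eigenvalues i)

/-! ### Sparse tangent spaces -/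

/-- Tangent space to the variety of sparse matrices at `M₀`. -/
def OmegaSet (M₀ : Matrix (Fin p) (Fin p) ℝ) : Set (Matrix (Fin p) (Fin p) ℝ) :=
  {N | ∀ i j, M₀ i j = 0 → N i j = 0}

/-- Orthogonal projection onto `OmegaSet M₀`. -/
def projOmega (M₀ N : Matrix (Fin p) (Fin p) ℝ) : Matrix (Fin p) (Fin p) ℝ :=
  Matrix.of fun i j => if M₀ i j = 0 then 0 else N i j

/-- Orthogonal projection onto the orthogonal complement of `OmegaSet M₀`. -/
def projOmegaPerp (M₀ N : Matrix (Fin p) (Fin p) ℝ) : Matrix (Fin p) (Fin p) ℝ :=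
  Matrix.of fun i j => if M₀ i j = 0 then N i j else 0

/-- `μ(Ω(M₀))`: max spectral norm over the `‖·‖_∞`-unit ball of `Ω(M₀)`. -/
def muOmega (M₀ : Matrix (Fin p) (Fin p) ℝ) : ℝ :=
  ⨆ N : {N : Matrix (Fin p) (Fin p) ℝ // N ∈ OmegaSet M₀ ∧ maxNorm N ≤ 1}, specNorm N.1

/-! ### Low-rank tangent spaces (symmetric version) -/

/-- `𝒫_{T(M)}` for symmetric `M`: `N ↦ P N + N P − P N P` with `P` the column-space projector. -/
def projTsym (M N : Matrix (Fin p) (Fin p) ℝ) : Matrix (Fin p) (Fin p) ℝ :=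
  colProj M * N + N * colProj M - colProj M * N * colProj M

/-- `𝒫_{T(M)^⊥}` for symmetric `M`: `N ↦ (I−P) N (I−P)`. -/
def projTsymPerp (M N : Matrix (Fin p) (Fin p) ℝ) : Matrix (Fin p) (Fin p) ℝ :=
  (1 - colProj M) * N * (1 - colProj M)

/-- Tangent space to the variety of symmetric low-rank matrices at symmetric `M`. -/
def TsetSym (M : Matrix (Fin p) (Fin p) ℝ) : Set (Matrix (Fin p) (Fin p) ℝ) :=
  {N | N.IsHermitian ∧ projTsymPerp M N = 0}

/-- `ξ(T(M))` (symmetric version). -/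
def xiT (M : Matrix (Fin p) (Fin p) ℝ) : ℝ :=
  ⨆ N : {N : Matrix (Fin p) (Fin p) ℝ // N ∈ TsetSym M ∧ specNorm N ≤ 1}, maxNorm N.1

/-- `ρ(T(M₁), T(M₂))` (symmetric version). -/
def rhoSym (M₁ M₂ : Matrix (Fin p) (Fin p) ℝ) : ℝ :=
  ⨆ N : {N : Matrix (Fin p) (Fin p) ℝ // specNorm N ≤ 1},
    specNorm (projTsym M₁ N.1 - projTsym M₂ N.1)

/-! ### Low-rank tangent spaces (general version) -/

/-- `𝒫_{T(M)}` for general `M`: `N ↦ P_U N + N P_V − P_U N P_V`. -/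
def projTgen (M N : Matrix (Fin p) (Fin p) ℝ) : Matrix (Fin p) (Fin p) ℝ :=
  colProj M * N + N * colProj Mᵀ - colProj M * N * colProj Mᵀ

/-- `𝒫_{T(M)^⊥}` for general `M`. -/
def projTgenPerp (M N : Matrix (Fin p) (Fin p) ℝ) : Matrix (Fin p) (Fin p) ℝ :=
  (1 - colProj M) * N * (1 - colProj Mᵀ)

/-- Tangent space to the variety of low-rank matrices at a general matrix `M`. -/
def TsetGen (M : Matrix (Fin p) (Fin p) ℝ) : Set (Matrix (Fin p) (Fin p) ℝ) :=
  {N | projTgenPerp M N = 0}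

/-- `ξ(T(M))` (general version). -/
def xiGen (M : Matrix (Fin p) (Fin p) ℝ) : ℝ :=
  ⨆ N : {N : Matrix (Fin p) (Fin p) ℝ // N ∈ TsetGen M ∧ specNorm N ≤ 1}, maxNorm N.1

/-- Euclidean norm of the `i`-th column of `P`, i.e. `‖P e_i‖`. -/
def colEucNorm (P : Matrix (Fin p) (Fin p) ℝ) (i : Fin p) : ℝ :=
  Real.sqrt (∑ j, (P j i) ^ 2)

/-- Incoherence `inc(M)` of the row/column spaces of `M`. -/
def inc (M : Matrix (Fin p) (Fin p) ℝ) : ℝ :=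
  max (⨆ i, colEucNorm (colProj M) i) (⨆ i, colEucNorm (colProj Mᵀ) i)

/-! ### Orthogonal projections onto arbitrary subspaces of matrices -/

/-- Matrices as vectors in the Euclidean space of entries (trace inner product). -/
def toELin : Matrix (Fin p) (Fin p) ℝ →ₗ[ℝ] EuclideanSpace ℝ (Fin p × Fin p) where
  toFun M := WithLp.toLp 2 (fun q => M q.1 q.2)
  map_add' _ _ := rfl
  map_smul' _ _ := rfl

/-- Orthogonal projection (trace inner product) onto a subspace of matrices. -/
def matProj (T : Submodule ℝ (Matrix (Fin p) (Fin p) ℝ)) (N : Matrix (Fin p) (Fin p) ℝ) :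
    Matrix (Fin p) (Fin p) ℝ :=
  Matrix.of fun i j => (Submodule.orthogonalProjectionOnto (T.map toELin) (toELin N) : EuclideanSpace ℝ (Fin p × Fin p)) (i, j)

/-- `ρ(T₁,T₂)` for arbitrary subspaces of matrices. -/
def rhoSub (T₁ T₂ : Submodule ℝ (Matrix (Fin p) (Fin p) ℝ)) : ℝ :=
  ⨆ N : {N : Matrix (Fin p) (Fin p) ℝ // specNorm N ≤ 1},
    specNorm (matProj T₁ N.1 - matProj T₂ N.1)

/-- `ξ(T)` for an arbitrary subspace of matrices. -/
def xiSub (T : Submodule ℝ (Matrix (Fin p) (Fin p) ℝ)) : ℝ :=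
  ⨆ N : {N : Matrix (Fin p) (Fin p) ℝ // N ∈ T ∧ specNorm N ≤ 1}, maxNorm N.1

/-! ### The dual norm g_γ -/

/-- `g_γ(S,L) = max(‖S‖_∞/γ, ‖L‖₂)`. -/
def gNorm (γ : ℝ) (S L : Matrix (Fin p) (Fin p) ℝ) : ℝ :=
  max (maxNorm S / γ) (specNorm L)

/-- `g_γ(𝒜†(M)) = max(‖M‖_∞/γ, ‖M‖₂)`. -/
def gA (γ : ℝ) (M : Matrix (Fin p) (Fin p) ℝ) : ℝ :=
  max (maxNorm M / γ) (specNorm M)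

/-! ### Latent-variable Fisher information setup -/

/-- `S* = K*_O`. -/
def Sstar (K : Matrix (Fin p ⊕ Fin h) (Fin p ⊕ Fin h) ℝ) : Matrix (Fin p) (Fin p) ℝ :=
  K.toBlocks₁₁

/-- `L* = K*_{O,H} (K*_H)⁻¹ K*_{H,O}`. -/
def Lstar (K : Matrix (Fin p ⊕ Fin h) (Fin p ⊕ Fin h) ℝ) : Matrix (Fin p) (Fin p) ℝ :=
  K.toBlocks₁₂ * (K.toBlocks₂₂)⁻¹ * K.toBlocks₂₁

/-- `K̃*_O = S* − L*` (Schur complement). -/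
def KtildeO (K : Matrix (Fin p ⊕ Fin h) (Fin p ⊕ Fin h) ℝ) : Matrix (Fin p) (Fin p) ℝ :=
  Sstar K - Lstar K

/-- `Σ*_O = (K̃*_O)⁻¹`. -/
def SigmaO (K : Matrix (Fin p ⊕ Fin h) (Fin p ⊕ Fin h) ℝ) : Matrix (Fin p) (Fin p) ℝ :=
  (KtildeO K)⁻¹

/-- `ψ = ‖Σ*_O‖₂`. -/
def psi (K : Matrix (Fin p ⊕ Fin h) (Fin p ⊕ Fin h) ℝ) : ℝ :=
  specNorm (SigmaO K)

/-- Fisher information operator `ℐ*(M) = Σ*_O M Σ*_O`. -/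
def Istar (K : Matrix (Fin p ⊕ Fin h) (Fin p ⊕ Fin h) ℝ) (M : Matrix (Fin p) (Fin p) ℝ) :
    Matrix (Fin p) (Fin p) ℝ :=
  SigmaO K * M * SigmaO K

/-- A nearby tangent space: `T' = T(M')` for a symmetric `M'` with the same rank as `Lst`
and `ρ(T',T(Lst)) ≤ ξ(T(Lst))/2`. -/
def Nearby (Lst M' : Matrix (Fin p) (Fin p) ℝ) : Prop :=
  M'.IsHermitian ∧ M'.rank = Lst.rank ∧ rhoSym M' Lst ≤ xiT Lst / 2

/-- `α_Ω`. -/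
def alphaOmega (K : Matrix (Fin p ⊕ Fin h) (Fin p ⊕ Fin h) ℝ) : ℝ :=
  ⨅ M : {M : Matrix (Fin p) (Fin p) ℝ // M ∈ OmegaSet (Sstar K) ∧ maxNorm M = 1},
    maxNorm (projOmega (Sstar K) (Istar K (projOmega (Sstar K) M.1)))

/-- `δ_Ω`. -/
def deltaOmega (K : Matrix (Fin p ⊕ Fin h) (Fin p ⊕ Fin h) ℝ) : ℝ :=
  ⨆ M : {M : Matrix (Fin p) (Fin p) ℝ // M ∈ OmegaSet (Sstar K) ∧ maxNorm M = 1},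
    maxNorm (projOmegaPerp (Sstar K) (Istar K (projOmega (Sstar K) M.1)))

/-- `β_Ω`. -/
def betaOmega (K : Matrix (Fin p ⊕ Fin h) (Fin p ⊕ Fin h) ℝ) : ℝ :=
  ⨆ M : {M : Matrix (Fin p) (Fin p) ℝ // M ∈ OmegaSet (Sstar K) ∧ specNorm M = 1},
    specNorm (Istar K M.1)

/-- `α_T`. -/
def alphaTC (K : Matrix (Fin p ⊕ Fin h) (Fin p ⊕ Fin h) ℝ) : ℝ :=
  ⨅ x : {x : Matrix (Fin p) (Fin p) ℝ × Matrix (Fin p) (Fin p) ℝ //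
      Nearby (Lstar K) x.1 ∧ x.2 ∈ TsetSym x.1 ∧ specNorm x.2 = 1},
    specNorm (projTsym x.1.1 (Istar K (projTsym x.1.1 x.1.2)))

/-- `δ_T`. -/
def deltaTC (K : Matrix (Fin p ⊕ Fin h) (Fin p ⊕ Fin h) ℝ) : ℝ :=
  ⨆ x : {x : Matrix (Fin p) (Fin p) ℝ × Matrix (Fin p) (Fin p) ℝ //
      Nearby (Lstar K) x.1 ∧ x.2 ∈ TsetSym x.1 ∧ specNorm x.2 = 1},
    specNorm (projTsymPerp x.1.1 (Istar K (projTsym x.1.1 x.1.2)))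

/-- `β_T`. -/
def betaTC (K : Matrix (Fin p ⊕ Fin h) (Fin p ⊕ Fin h) ℝ) : ℝ :=
  ⨆ x : {x : Matrix (Fin p) (Fin p) ℝ × Matrix (Fin p) (Fin p) ℝ //
      Nearby (Lstar K) x.1 ∧ x.2 ∈ TsetSym x.1 ∧ maxNorm x.2 = 1},
    maxNorm (Istar K x.1.2)

/-- `α = min(α_Ω, α_T)`. -/
def alphaC (K : Matrix (Fin p ⊕ Fin h) (Fin p ⊕ Fin h) ℝ) : ℝ :=
  min (alphaOmega K) (alphaTC K)

/-- `δ = max(δ_Ω, δ_T)`. -/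
def deltaC (K : Matrix (Fin p ⊕ Fin h) (Fin p ⊕ Fin h) ℝ) : ℝ :=
  max (deltaOmega K) (deltaTC K)

/-- `β = max(β_Ω, β_T)`. -/
def betaC (K : Matrix (Fin p ⊕ Fin h) (Fin p ⊕ Fin h) ℝ) : ℝ :=
  max (betaOmega K) (betaTC K)

/-! ### Probability: iid Gaussian samples and sample covariance -/

/-- The positive semidefinite square root of a positive semidefinite matrix (the former
`Matrix.PosSemidef.sqrt`, spelled out with its old definition). -/
def psdSqrt {A : Matrix (Fin p) (Fin p) ℝ} (hA : A.PosSemidef) : Matrix (Fin p) (Fin p) ℝ :=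
  hA.1.eigenvectorUnitary.1 * diagonal ((↑) ∘ (Real.sqrt ·) ∘ hA.1.eigenvalues) *
    (star hA.1.eigenvectorUnitary : Matrix (Fin p) (Fin p) ℝ)

/-- The joint law of `n` i.i.d. samples from `N(0, S)` on `ℝ^p`, realized by pushing forward
i.i.d. standard Gaussians through the positive-semidefinite square root of `S`. -/
def iidGaussian (n p : ℕ) (S : Matrix (Fin p) (Fin p) ℝ) : Measure (Fin n → Fin p → ℝ) :=
  if hS : S.PosSemidef then
    (Measure.pi fun _ : Fin n => Measure.pi fun _ : Fin p =>
        ProbabilityTheory.gaussianReal 0 1).map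
      (fun Z => fun i => (psdSqrt hS).mulVec (Z i))
  else 0

/-- Sample covariance matrix of samples `X 1, …, X n`. -/
def sampleCov {p n : ℕ} (X : Fin n → Fin p → ℝ) : Matrix (Fin p) (Fin p) ℝ :=
  (n : ℝ)⁻¹ • ∑ i, Matrix.vecMulVec (X i) (X i)

/-! ### Optimization programs -/

/-- Nuclear norm `‖M‖_*` (sum of singular values). -/
def nuclearNorm (M : Matrix (Fin p) (Fin p) ℝ) : ℝ :=
  (psdSqrt (Matrix.posSemidef_conjTranspose_mul_self M)).trace

/-- Objective of the program (sdp1): `tr((S−L)Σ) − log det(S−L) + λ(γ‖S‖₁ + tr(L))`. -/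
def objSDP1 (Sig : Matrix (Fin p) (Fin p) ℝ) (lam gam : ℝ)
    (S L : Matrix (Fin p) (Fin p) ℝ) : ℝ :=
  ((S - L) * Sig).trace - Real.log (S - L).det + lam * (gam * l1Norm S + L.trace)

/-- Feasibility for (sdp1): symmetric `S, L`, `S − L ≻ 0`, `L ⪰ 0`. -/
def FeasSDP1 (S L : Matrix (Fin p) (Fin p) ℝ) : Prop :=
  S.IsHermitian ∧ L.IsHermitian ∧ (S - L).PosDef ∧ L.PosSemidef

/-- `(S,L)` is an optimum of the program (sdp1). -/
def IsOptSDP1 (Sig : Matrix (Fin p) (Fin p) ℝ) (lam gam : ℝ)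
    (S L : Matrix (Fin p) (Fin p) ℝ) : Prop :=
  FeasSDP1 S L ∧ ∀ S' L', FeasSDP1 S' L' →
    objSDP1 Sig lam gam S L ≤ objSDP1 Sig lam gam S' L'

/-- Objective with the nuclear norm: `tr((S−L)Σ) − log det(S−L) + λ(γ‖S‖₁ + ‖L‖_*)`. -/
def objNuc (Sig : Matrix (Fin p) (Fin p) ℝ) (lam gam : ℝ)
    (S L : Matrix (Fin p) (Fin p) ℝ) : ℝ :=
  ((S - L) * Sig).trace - Real.log (S - L).det + lam * (gam * l1Norm S + nuclearNorm L)

/-- Feasibility for the tangent-space constrained program: symmetric, `S ∈ Ω(Sst)`,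
`L ∈ T(M')`, `S − L ≻ 0`. -/
def FeasTS (Sst M' : Matrix (Fin p) (Fin p) ℝ) (S L : Matrix (Fin p) (Fin p) ℝ) : Prop :=
  S.IsHermitian ∧ S ∈ OmegaSet Sst ∧ L ∈ TsetSym M' ∧ (S - L).PosDef

/-- Optimality for the tangent-space constrained program. -/
def IsOptTS (Sst M' Sig : Matrix (Fin p) (Fin p) ℝ) (lam gam : ℝ)
    (S L : Matrix (Fin p) (Fin p) ℝ) : Prop :=
  FeasTS Sst M' S L ∧ ∀ S' L', FeasTS Sst M' S' L' →
    objNuc Sig lam gam S L ≤ objNuc Sig lam gam S' L'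

/-- Feasibility for the unconstrained nuclear-norm program: symmetric, `S − L ≻ 0`. -/
def FeasSy (S L : Matrix (Fin p) (Fin p) ℝ) : Prop :=
  S.IsHermitian ∧ L.IsHermitian ∧ (S - L).PosDef

/-- Optimality for the unconstrained nuclear-norm program. -/
def IsOptSy (Sig : Matrix (Fin p) (Fin p) ℝ) (lam gam : ℝ)
    (S L : Matrix (Fin p) (Fin p) ℝ) : Prop :=
  FeasSy S L ∧ ∀ S' L', FeasSy S' L' →
    objNuc Sig lam gam S L ≤ objNuc Sig lam gam S' L'

/-! ### Spectral projectors and inertia -/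

/-- Orthogonal projection onto the direct sum of the eigenspaces of a symmetric matrix `A`
corresponding to eigenvalues of magnitude less than `η`. -/
def spectralProjLT (A : Matrix (Fin p) (Fin p) ℝ) (η : ℝ) : Matrix (Fin p) (Fin p) ℝ :=
  if hA : A.IsHermitian then
    ∑ i ∈ Finset.univ.filter (fun i => |hA.eigenvalues i| < η),
      Matrix.vecMulVec (fun j => hA.eigenvectorBasis i j) (fun j => hA.eigenvectorBasis i j)
  else 0

/-- `t` is an eigenvalue of `A`. -/
def hasEigval (A : Matrix (Fin p) (Fin p) ℝ) (t : ℝ) : Prop :=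
  ∃ v : Fin p → ℝ, v ≠ 0 ∧ A.mulVec v = t • v

/-- Inertia (numbers of positive, negative, and zero eigenvalues) of a symmetric matrix. -/
def inertia (M : Matrix (Fin p) (Fin p) ℝ) : ℕ × ℕ × ℕ :=
  if hM : M.IsHermitian then
    ((Finset.univ.filter fun i => 0 < hM.eigenvalues i).card,
     (Finset.univ.filter fun i => hM.eigenvalues i < 0).card,
     (Finset.univ.filter fun i => hM.eigenvalues i = 0).card)
  else (0, 0, 0)

end LVGGM

/-!
Since `S ∈ Ω` and `L ∈ T`, the two components of `𝒫_𝒴 𝒜† 𝒜 𝒫_𝒴 (S, L)` are the perturbations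
`S + 𝒫_Ω L` and `L + 𝒫_T S` of `S` and `L`. The first is small in `‖·‖∞`, since
`‖𝒫_Ω L‖∞ ≤ ‖L‖∞ ≤ ξ(T)`; the second is small in `‖·‖₂`, since writing
`𝒫_T N = P_U N + (I − P_U) N P_V` gives `‖𝒫_T S‖₂ ≤ 2‖S‖₂ ≤ 2μ(Ω)γ`. The reverse triangle
inequality then puts both arguments of `g_γ` within `χ(Ω,T,γ)` of `1`.
-/

namespace LVGGM

variable {p : ℕ}

theorem maxNorm_nonneg (A : Matrix (Fin p) (Fin p) ℝ) : 0 ≤ maxNorm A :=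
  Real.iSup_nonneg fun _ => Real.iSup_nonneg fun _ => abs_nonneg _

theorem abs_apply_le_maxNorm (A : Matrix (Fin p) (Fin p) ℝ) (i j : Fin p) :
    |A i j| ≤ maxNorm A :=
  (le_ciSup (Finite.bddAbove_range _) j).trans
    (le_ciSup (f := fun i => ⨆ j, |A i j|) (Finite.bddAbove_range _) i)

theorem maxNorm_le {A : Matrix (Fin p) (Fin p) ℝ} {c : ℝ} (hc : 0 ≤ c)
    (h : ∀ i j, |A i j| ≤ c) : maxNorm A ≤ c :=
  Real.iSup_le (fun i => Real.iSup_le (h i) hc) hc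

theorem maxNorm_eq_norm_of_symm (A : Matrix (Fin p) (Fin p) ℝ) : maxNorm A = ‖of.symm A‖ :=
  le_antisymm
    (maxNorm_le (norm_nonneg _) fun i j =>
      (norm_le_pi_norm (of.symm A i) j).trans (norm_le_pi_norm (of.symm A) i))
    ((pi_norm_le_iff_of_nonneg (maxNorm_nonneg A)).2 fun i =>
      (pi_norm_le_iff_of_nonneg (maxNorm_nonneg A)).2 fun j => abs_apply_le_maxNorm A i j)

theorem abs_maxNorm_add_sub_le (A B : Matrix (Fin p) (Fin p) ℝ) :
    |maxNorm (A + B) - maxNorm A| ≤ maxNorm B := by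
  simp only [maxNorm_eq_norm_of_symm]
  exact (abs_norm_sub_norm_le _ _).trans_eq
    (congrArg norm (add_sub_cancel_left (of.symm A) (of.symm B)))

theorem exists_specNorm_le_mul_maxNorm :
    ∃ C, ∀ A : Matrix (Fin p) (Fin p) ℝ, specNorm A ≤ C * maxNorm A := by
  let f := LinearMap.toContinuousLinearMap
    (((Matrix.toEuclideanLin (𝕜 := ℝ) (m := Fin p) (n := Fin p)).trans
      LinearMap.toContinuousLinearMap).toLinearMap ∘ₗ (Matrix.ofLinearEquiv ℝ).toLinearMap)
  exact ⟨‖f‖, fun A => by rw [maxNorm_eq_norm_of_symm]; exact f.le_opNorm (of.symm A)⟩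

theorem abs_specNorm_add_sub_le (A B : Matrix (Fin p) (Fin p) ℝ) :
    |specNorm (A + B) - specNorm A| ≤ specNorm B := by
  unfold specNorm
  rw [map_add]
  exact (abs_norm_sub_norm_le _ _).trans_eq (congrArg norm (add_sub_cancel_left _ _))

open scoped RealInnerProductSpace in
theorem abs_apply_le_specNorm (A : Matrix (Fin p) (Fin p) ℝ) (i j : Fin p) :
    |A i j| ≤ specNorm A := by
  set e : Fin p → EuclideanSpace ℝ (Fin p) := fun k => EuclideanSpace.single k 1
  have he : ∀ k, ‖e k‖ = 1 := fun k => by simp [e]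
  have hA : A i j = ⟪e i, toEuclideanCLM (𝕜 := ℝ) A (e j)⟫ := by
    simp [e, inner_toEuclideanCLM]
  calc |A i j| ≤ ‖e i‖ * ‖toEuclideanCLM (𝕜 := ℝ) A (e j)‖ := hA ▸ abs_real_inner_le_norm _ _
    _ ≤ 1 * (specNorm A * ‖e j‖) := by
        rw [he]; exact mul_le_mul_of_nonneg_left (ContinuousLinearMap.le_opNorm _ _) zero_le_one
    _ = specNorm A := by rw [he]; ring

theorem maxNorm_le_specNorm (A : Matrix (Fin p) (Fin p) ℝ) : maxNorm A ≤ specNorm A :=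
  maxNorm_le (norm_nonneg _) (abs_apply_le_specNorm A)

theorem toEuclideanCLM_colProj (M : Matrix (Fin p) (Fin p) ℝ) :
    toEuclideanCLM (𝕜 := ℝ) (colProj M) = (LinearMap.range (toEuclideanLin M)).starProjection := by
  ext1 x
  change toEuclideanLin (colProj M) x = _
  rw [toEuclideanLin_eq_toLin_orthonormal, colProj, toLin_toMatrix]
  rfl

theorem norm_mul_add_mul_sub_mul_mul_le {R : Type*} [SeminormedRing R] {P Q : R}
    (hP : ‖P‖ ≤ 1) (hP' : ‖1 - P‖ ≤ 1) (hQ : ‖Q‖ ≤ 1) (N : R) :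
    ‖P * N + N * Q - P * N * Q‖ ≤ 2 * ‖N‖ := by
  have hNQ : ‖N * Q‖ ≤ ‖N‖ := (norm_mul_le _ _).trans (mul_le_of_le_one_right (norm_nonneg _) hQ)
  calc ‖P * N + N * Q - P * N * Q‖ = ‖P * N + (1 - P) * (N * Q)‖ := by noncomm_ring
    _ ≤ ‖P‖ * ‖N‖ + ‖1 - P‖ * ‖N * Q‖ :=
        (norm_add_le _ _).trans (add_le_add (norm_mul_le _ _) (norm_mul_le _ _))
    _ ≤ 1 * ‖N‖ + 1 * ‖N‖ := by gcongr
    _ = 2 * ‖N‖ := by ring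

theorem specNorm_projTgen_le (M N : Matrix (Fin p) (Fin p) ℝ) :
    specNorm (projTgen M N) ≤ 2 * specNorm N := by
  set K := LinearMap.range (toEuclideanLin M)
  have hK' : ‖1 - K.starProjection‖ ≤ 1 := by
    rw [← Submodule.starProjection_orthogonal']
    exact Kᗮ.starProjection_norm_le
  unfold specNorm projTgen
  simp only [map_sub, map_add, map_mul, toEuclideanCLM_colProj]
  exact norm_mul_add_mul_sub_mul_mul_le K.starProjection_norm_le hK'
    (Submodule.starProjection_norm_le _) _

theorem projOmega_add (M₀ A B : Matrix (Fin p) (Fin p) ℝ) :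
    projOmega M₀ (A + B) = projOmega M₀ A + projOmega M₀ B := by
  ext i j
  by_cases h : M₀ i j = 0 <;> simp [projOmega, h]

theorem projOmega_of_mem {M₀ S : Matrix (Fin p) (Fin p) ℝ} (hS : S ∈ OmegaSet M₀) :
    projOmega M₀ S = S := by
  ext i j
  by_cases h : M₀ i j = 0 <;> simp [projOmega, h, hS i j]

theorem maxNorm_projOmega_le (M₀ N : Matrix (Fin p) (Fin p) ℝ) :
    maxNorm (projOmega M₀ N) ≤ maxNorm N := by
  refine maxNorm_le (maxNorm_nonneg N) fun i j => ?_
  by_cases h : M₀ i j = 0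
  · simpa [projOmega, h] using maxNorm_nonneg N
  · simpa [projOmega, h] using abs_apply_le_maxNorm N i j

theorem projTgen_add (M A B : Matrix (Fin p) (Fin p) ℝ) :
    projTgen M (A + B) = projTgen M A + projTgen M B := by
  unfold projTgen
  noncomm_ring

theorem projTgen_of_mem {M L : Matrix (Fin p) (Fin p) ℝ} (hL : L ∈ TsetGen M) :
    projTgen M L = L := by
  have hperp : (1 - colProj M) * L * (1 - colProj Mᵀ) = 0 := hL
  calc projTgen M L = L - (1 - colProj M) * L * (1 - colProj Mᵀ) := by
        unfold projTgen; noncomm_ring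
    _ = L := by rw [hperp, sub_zero]

theorem bddAbove_range_specNorm_omega (M₀ : Matrix (Fin p) (Fin p) ℝ) :
    BddAbove (Set.range fun N : {N : Matrix (Fin p) (Fin p) ℝ //
      N ∈ OmegaSet M₀ ∧ maxNorm N ≤ 1} => specNorm N.1) := by
  obtain ⟨C, hC⟩ := exists_specNorm_le_mul_maxNorm (p := p)
  refine ⟨max C 0, ?_⟩
  rintro _ ⟨⟨N, -, hN⟩, rfl⟩
  calc specNorm N ≤ C * maxNorm N := hC N
    _ ≤ max C 0 * maxNorm N := mul_le_mul_of_nonneg_right (le_max_left _ _) (maxNorm_nonneg N)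
    _ ≤ max C 0 := mul_le_of_le_one_right (le_max_right _ _) hN

theorem specNorm_le_muOmega_mul {M₀ S : Matrix (Fin p) (Fin p) ℝ} (hS : S ∈ OmegaSet M₀)
    {γ : ℝ} (hγ : 0 < γ) (hSγ : maxNorm S ≤ γ) : specNorm S ≤ muOmega M₀ * γ := by
  have hmem : γ⁻¹ • S ∈ OmegaSet M₀ := fun i j h => by simp [hS i j h]
  have hle : maxNorm (γ⁻¹ • S) ≤ 1 := by
    refine maxNorm_le zero_le_one fun i j => ?_
    rw [Matrix.smul_apply, smul_eq_mul, abs_mul, abs_inv, abs_of_pos hγ, inv_mul_le_one₀ hγ]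
    exact (abs_apply_le_maxNorm S i j).trans hSγ
  have hμ : specNorm (γ⁻¹ • S) ≤ muOmega M₀ :=
    le_ciSup (bddAbove_range_specNorm_omega M₀) ⟨γ⁻¹ • S, hmem, hle⟩
  rw [specNorm, map_smul, norm_smul, Real.norm_of_nonneg (inv_nonneg.2 hγ.le),
    inv_mul_le_iff₀ hγ] at hμ
  rwa [mul_comm]

theorem maxNorm_le_xiGen {M L : Matrix (Fin p) (Fin p) ℝ} (hL : L ∈ TsetGen M)
    (hL1 : specNorm L ≤ 1) : maxNorm L ≤ xiGen M := by
  refine le_ciSup (f := fun N : {N : Matrix (Fin p) (Fin p) ℝ //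
    N ∈ TsetGen M ∧ specNorm N ≤ 1} => maxNorm N.1) ⟨1, ?_⟩ ⟨L, hL, hL1⟩
  rintro _ ⟨N, rfl⟩
  exact (maxNorm_le_specNorm N.1).trans N.2.2

theorem max_mem_Icc_of_abs_sub_one_le {a b χ : ℝ} (ha : |a - 1| ≤ χ) (hb : |b - 1| ≤ χ) :
    max a b ∈ Set.Icc (1 - χ) (1 + χ) := by
  rw [abs_sub_le_iff] at ha hb
  exact ⟨le_max_of_le_left (by linarith), max_le (by linarith) (by linarith)⟩

end LVGGM

open LVGGM in
theorem statement_6_general {p : ℕ} (M₀ M₁ : Matrix (Fin p) (Fin p) ℝ)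
    (γ : ℝ) (hγ : 0 < γ)
    (S L : Matrix (Fin p) (Fin p) ℝ)
    (hS : S ∈ LVGGM.OmegaSet M₀) (hSnorm : LVGGM.maxNorm S = γ)
    (hL : L ∈ LVGGM.TsetGen M₁) (hLnorm : LVGGM.specNorm L = 1) :
    LVGGM.gNorm γ (LVGGM.projOmega M₀ (S + L)) (LVGGM.projTgen M₁ (S + L)) ∈
      Set.Icc (1 - max (LVGGM.xiGen M₁ / γ) (2 * LVGGM.muOmega M₀ * γ))
              (1 + max (LVGGM.xiGen M₁ / γ) (2 * LVGGM.muOmega M₀ * γ)) := by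
  have hΩ : projOmega M₀ (S + L) = S + projOmega M₀ L := by
    rw [projOmega_add, projOmega_of_mem hS]
  have hT : projTgen M₁ (S + L) = L + projTgen M₁ S := by
    rw [projTgen_add, projTgen_of_mem hL, add_comm]
  have hξ : maxNorm (projOmega M₀ L) ≤ xiGen M₁ :=
    (maxNorm_projOmega_le M₀ L).trans (maxNorm_le_xiGen hL hLnorm.le)
  have hμ : specNorm (projTgen M₁ S) ≤ 2 * muOmega M₀ * γ := by
    rw [mul_assoc]
    exact (specNorm_projTgen_le M₁ S).trans
      (by gcongr; exact specNorm_le_muOmega_mul hS hγ hSnorm.le)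
  rw [gNorm, hΩ, hT]
  apply max_mem_Icc_of_abs_sub_one_le
  · calc |maxNorm (S + projOmega M₀ L) / γ - 1|
        = |maxNorm (S + projOmega M₀ L) - maxNorm S| / γ := by
          rw [hSnorm, div_sub_one hγ.ne', abs_div, abs_of_pos hγ]
      _ ≤ xiGen M₁ / γ := by gcongr; exact (abs_maxNorm_add_sub_le _ _).trans hξ
      _ ≤ _ := le_max_left _ _
  · rw [← hLnorm]
    exact (abs_specNorm_add_sub_le _ _).trans (hμ.trans (le_max_right _ _))

/-- Lemma: near-isometry of the addition operator restricted to `Ω × T`. -/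
theorem statement_6 {p : ℕ} (M₀ M₁ : Matrix (Fin p) (Fin p) ℝ) (hM₁ : M₁ ≠ 0)
    (γ : ℝ) (hγ : 0 < γ)
    (S L : Matrix (Fin p) (Fin p) ℝ)
    (hS : S ∈ LVGGM.OmegaSet M₀) (hSnorm : LVGGM.maxNorm S = γ)
    (hL : L ∈ LVGGM.TsetGen M₁) (hLnorm : LVGGM.specNorm L = 1) :
    LVGGM.gNorm γ (LVGGM.projOmega M₀ (S + L)) (LVGGM.projTgen M₁ (S + L)) ∈
      Set.Icc (1 - max (LVGGM.xiGen M₁ / γ) (2 * LVGGM.muOmega M₀ * γ))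
              (1 + max (LVGGM.xiGen M₁ / γ) (2 * LVGGM.muOmega M₀ * γ)) :=
  statement_6_general M₀ M₁ γ hγ S L hS hSnorm hL hLnorm
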